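/- Let V be a nonempty countable set and b : P(V) → [0,∞] satisfy conditions (0) b(X) = 0 iff X ∈ {∅, V}; (1) b(X) = b(V \ X); (2) submodularity; (3') b(lim X_n) ≤ liminf_n b(X_n) for every ⊆-monotone sequence (X_n); (4) λ_b has only finite values. Then for every u ≠ v ∈ V the infimum λ_b(u,v) is attained: there exists a u-v cut X* with b(X*) = λ_b(u,v). -/

import Mathlib

/-!
Choose `u-v` cuts `X n` with `b (X n) ≤ λ + ε n` and `∑ ε n < ∞`. For two cuts `A`, `B` the
union `A ∪ B` is again a cut, so submodularity gives `b (A ∩ B) + λ ≤ b A + b B`: the excess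
over `λ` is subadditive under intersection. Continuity along decreasing sequences extends this to
the tails, `b (⋂ k ≥ n, X k) ≤ λ + ∑ k ≥ n, ε k`, and continuity along the increasing sequence
of tails shows that the cut `⋃ n, ⋂ k ≥ n, X k` has `b ≤ λ`.
-/

open Set Filter Topology ENNReal

noncomputable section

/-- `λ_b(u,v)`: the infimum of `b(X)` over all `u-v` cuts `X`
(sets with `u ∈ X` and `v ∉ X`). -/
def lamB {V : Type*} (b : Set V → ℝ≥0∞) (u v : V) : ℝ≥0∞ :=
  ⨅ (X : Set V) (_ : u ∈ X ∧ v ∉ X), b X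

/-- `X` is an optimal `u-v` cut: a `u-v` cut with `b(X) = λ_b(u,v)`. -/
def IsOptCut {V : Type*} (b : Set V → ℝ≥0∞) (u v : V) (X : Set V) : Prop :=
  u ∈ X ∧ v ∉ X ∧ b X = lamB b u v

section Cuts

variable {V : Type*} {b : Set V → ℝ≥0∞} {u v : V}

lemma lamB_le {X : Set V} (hX : u ∈ X ∧ v ∉ X) : lamB b u v ≤ b X :=
  iInf₂_le X hX

lemma exists_cut_lt_of_lamB_lt {c : ℝ≥0∞} (h : lamB b u v < c) :
    ∃ X : Set V, (u ∈ X ∧ v ∉ X) ∧ b X < c := by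
  simpa only [lamB, iInf_lt_iff, exists_prop] using h

lemma inter_add_lamB_le (h2 : ∀ X Y : Set V, b (X ∩ Y) + b (X ∪ Y) ≤ b X + b Y)
    {A B : Set V} (hA : u ∈ A ∧ v ∉ A) (hB : u ∈ B ∧ v ∉ B) :
    b (A ∩ B) + lamB b u v ≤ b A + b B :=
  calc b (A ∩ B) + lamB b u v
      ≤ b (A ∩ B) + b (A ∪ B) := by
        gcongr
        exact lamB_le ⟨Or.inl hA.1, fun h => h.elim hA.2 hB.2⟩
    _ ≤ b A + b B := h2 A B

lemma biInter_le_lamB_add_sum (h2 : ∀ X Y : Set V, b (X ∩ Y) + b (X ∪ Y) ≤ b X + b Y)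
    {X : ℕ → Set V} (hX : ∀ n, u ∈ X n ∧ v ∉ X n) {ε : ℕ → ℝ≥0∞}
    (hb : ∀ n, b (X n) ≤ lamB b u v + ε n) (m : ℕ) :
    b (⋂ k ≤ m, X k) ≤ lamB b u v + ∑ k ∈ Finset.range (m + 1), ε k := by
  induction m with
  | zero => simpa using hb 0
  | succ m ih =>
    obtain hL | hL := eq_or_ne (lamB b u v) ⊤
    · simp [hL]
    have hcut : u ∈ ⋂ k ≤ m, X k ∧ v ∉ ⋂ k ≤ m, X k :=
      ⟨mem_biInter fun k _ => (hX k).1, fun h => (hX 0).2 (mem_iInter₂.mp h 0 (Nat.zero_le m))⟩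
    refine ENNReal.le_of_add_le_add_right hL ?_
    calc b (⋂ k ≤ m + 1, X k) + lamB b u v
        ≤ b (⋂ k ≤ m, X k) + b (X (m + 1)) := by
          rw [biInter_le_succ]
          exact inter_add_lamB_le h2 hcut (hX (m + 1))
      _ ≤ (lamB b u v + ∑ k ∈ Finset.range (m + 1), ε k) + (lamB b u v + ε (m + 1)) :=
          add_le_add ih (hb (m + 1))
      _ = (lamB b u v + ∑ k ∈ Finset.range (m + 2), ε k) + lamB b u v := by
          rw [Finset.sum_range_succ _ (m + 1)]
          ring

lemma iInter_le_lamB_add_tsum (h2 : ∀ X Y : Set V, b (X ∩ Y) + b (X ∪ Y) ≤ b X + b Y)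
    (h3a : ∀ X : ℕ → Set V, Antitone X →
      b (⋂ n, X n) ≤ Filter.liminf (fun n => b (X n)) Filter.atTop)
    {X : ℕ → Set V} (hX : ∀ n, u ∈ X n ∧ v ∉ X n) {ε : ℕ → ℝ≥0∞}
    (hb : ∀ n, b (X n) ≤ lamB b u v + ε n) :
    b (⋂ n, X n) ≤ lamB b u v + ∑' n, ε n := by
  have hanti : Antitone fun m => ⋂ k ≤ m, X k := fun m m' hm =>
    biInter_mono (fun k hk => le_trans hk hm) fun _ _ => le_rfl
  have hlim : ⋂ m, ⋂ k ≤ m, X k = ⋂ n, X n := by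
    ext x
    simp only [mem_iInter]
    exact ⟨fun h n => h n n le_rfl, fun h _ k _ => h k⟩
  rw [← hlim]
  refine (h3a _ hanti).trans (liminf_le_of_frequently_le' (Frequently.of_forall fun m => ?_))
  exact (biInter_le_lamB_add_sum h2 hX hb m).trans (by gcongr; exact ENNReal.sum_le_tsum _)

lemma iUnion_iInter_le_lamB (h2 : ∀ X Y : Set V, b (X ∩ Y) + b (X ∪ Y) ≤ b X + b Y)
    (h3m : ∀ X : ℕ → Set V, Monotone X →
      b (⋃ n, X n) ≤ Filter.liminf (fun n => b (X n)) Filter.atTop)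
    (h3a : ∀ X : ℕ → Set V, Antitone X →
      b (⋂ n, X n) ≤ Filter.liminf (fun n => b (X n)) Filter.atTop)
    {X : ℕ → Set V} (hX : ∀ n, u ∈ X n ∧ v ∉ X n) {ε : ℕ → ℝ≥0∞}
    (hb : ∀ n, b (X n) ≤ lamB b u v + ε n) (hε : ∑' n, ε n ≠ ⊤) :
    b (⋃ n, ⋂ k, X (k + n)) ≤ lamB b u v := by
  have hmono : Monotone fun n => ⋂ k, X (k + n) := fun n n' hn x hx =>
    mem_iInter.mpr fun k => by
      simpa only [show k + n' - n + n = k + n' by omega] using mem_iInter.mp hx (k + n' - n)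
  have htail : Tendsto (fun n => lamB b u v + ∑' k, ε (k + n)) atTop (𝓝 (lamB b u v)) := by
    simpa using (ENNReal.tendsto_sum_nat_add ε hε).const_add (lamB b u v)
  calc b (⋃ n, ⋂ k, X (k + n))
      ≤ liminf (fun n => b (⋂ k, X (k + n))) atTop := h3m _ hmono
    _ ≤ liminf (fun n => lamB b u v + ∑' k, ε (k + n)) atTop :=
        liminf_le_liminf (Eventually.of_forall fun n =>
          iInter_le_lamB_add_tsum h2 h3a (fun k => hX (k + n)) fun k => hb (k + n))
    _ = lamB b u v := htail.liminf_eq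

end Cuts

theorem exists_optimal_cut_general {V : Type*} (b : Set V → ℝ≥0∞)
    (h2 : ∀ X Y : Set V, b (X ∩ Y) + b (X ∪ Y) ≤ b X + b Y)
    (h3m : ∀ X : ℕ → Set V, Monotone X →
      b (⋃ n, X n) ≤ Filter.liminf (fun n => b (X n)) Filter.atTop)
    (h3a : ∀ X : ℕ → Set V, Antitone X →
      b (⋂ n, X n) ≤ Filter.liminf (fun n => b (X n)) Filter.atTop)
    (h4 : ∀ u v : V, u ≠ v → lamB b u v < ⊤) :
    ∀ u v : V, u ≠ v → ∃ X : Set V, u ∈ X ∧ v ∉ X ∧ b X = lamB b u v := by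
  intro u v huv
  obtain ⟨ε, hεpos, hεsum⟩ := ENNReal.exists_pos_sum_of_countable one_ne_zero ℕ
  have hnear : ∀ n, ∃ X : Set V, (u ∈ X ∧ v ∉ X) ∧ b X < lamB b u v + ε n := fun n =>
    exists_cut_lt_of_lamB_lt <|
      ENNReal.lt_add_right (h4 u v huv).ne (ENNReal.coe_pos.mpr (hεpos n)).ne'
  choose X hX hb using hnear
  have hcut : u ∈ ⋃ n, ⋂ k, X (k + n) ∧ v ∉ ⋃ n, ⋂ k, X (k + n) :=
    ⟨mem_iUnion.mpr ⟨0, mem_iInter.mpr fun k => (hX _).1⟩,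
      fun h => (mem_iUnion.mp h).elim fun n hn => (hX _).2 (mem_iInter.mp hn 0)⟩
  refine ⟨_, hcut.1, hcut.2, le_antisymm ?_ (lamB_le hcut)⟩
  exact iUnion_iInter_le_lamB h2 h3m h3a hX (fun n => (hb n).le) (hεsum.trans one_lt_top).ne

/-- Under conditions (0), (1), (2), (3') and (4), the infimum `λ_b(u,v)` is attained. -/
theorem exists_optimal_cut {V : Type*} [Countable V] [Nonempty V] (b : Set V → ℝ≥0∞)
    (h0 : ∀ X : Set V, b X = 0 ↔ X = ∅ ∨ X = Set.univ)
    (h1 : ∀ X : Set V, b Xᶜ = b X)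
    (h2 : ∀ X Y : Set V, b (X ∩ Y) + b (X ∪ Y) ≤ b X + b Y)
    (h3m : ∀ X : ℕ → Set V, Monotone X →
      b (⋃ n, X n) ≤ Filter.liminf (fun n => b (X n)) Filter.atTop)
    (h3a : ∀ X : ℕ → Set V, Antitone X →
      b (⋂ n, X n) ≤ Filter.liminf (fun n => b (X n)) Filter.atTop)
    (h4 : ∀ u v : V, u ≠ v → lamB b u v < ⊤) :
    ∀ u v : V, u ≠ v → ∃ X : Set V, u ∈ X ∧ v ∉ X ∧ b X = lamB b u v :=
  exists_optimal_cut_general b h2 h3m h3a h4
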